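/- Let Y be a bounded metric space with points y₁, y₂ such that d(y₁,y₂) = diam Y, and let r₁, r₂ ≥ 0. Then the two-point extension Z_{r₁,r₂}(y₁,y₂) is a metric space with diam Z_{r₁,r₂}(y₁,y₂) = diam Y + r₁ + r₂, and the curve γ(t) = Z_{r₁t, r₂t}(y₁,y₂), t ∈ [0,1], satisfies 2·d_GH(γ(t₁), γ(t₂)) = |t₁ − t₂|·(r₁ + r₂) for all t₁, t₂ ∈ [0,1]; in particular γ is a shortest curve joining Y and Z_{r₁,r₂}(y₁,y₂). -/

import Mathlib

/-!
`Z_{a,b}(y₁,y₂)` is built on `Y ⊕ {z₁, z₂}` by setting `d(x, x') = d(c x, c x') + ρ x + ρ x'` for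
`x ≠ x'`, where `c` sends `zᵢ` to `yᵢ` and the radius `ρ` is `a`, `b` at `z₁`, `z₂` and `0` on `Y`.
As `y₁, y₂` are diametral, `diam Z_{a,b} = diam Y + a + b`. Matching points with the same label
is a correspondence of distortion at most `|a - a'| + |b - b'|`, while any correspondence has
distortion at least `|diam X - diam Y|`. Along the segment `(a, b) = (r₁t, r₂t)` both bounds
equal `|t₁ - t₂|(r₁ + r₂)`.
-/

open Metric Set
open scoped ENNReal

/-- A correspondence between `X` and `Y`: a relation whose projections are surjective. -/
def IsCorrespondence {X Y : Type*} (R : Set (X × Y)) : Prop :=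
  (∀ x : X, ∃ y : Y, (x, y) ∈ R) ∧ (∀ y : Y, ∃ x : X, (x, y) ∈ R)

/-- The distortion of a relation `R ⊆ X × Y`. -/
noncomputable def corrDistortion {X Y : Type*} [MetricSpace X] [MetricSpace Y]
    (R : Set (X × Y)) : ℝ≥0∞ :=
  ⨆ p ∈ R, ⨆ q ∈ R, ENNReal.ofReal |dist p.1 q.1 - dist p.2 q.2|

/-- The Gromov–Hausdorff distance between (arbitrary) metric spaces:
half the infimum of distortions of correspondences. -/
noncomputable def ghDist (X Y : Type*) [MetricSpace X] [MetricSpace Y] : ℝ≥0∞ :=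
  (⨅ (R : Set (X × Y)) (_ : IsCorrespondence R), corrDistortion R) / 2

/-- `Z` (together with the isometric embedding `ι` and the two points `z₁`, `z₂`) is the
two-point extension `Z_{r₁,r₂}(y₁,y₂)` of `Y`: every point of `Z` is either `ι y` or one
of `z₁`, `z₂`, with `dist z₁ z₂ = r₁ + dist y₁ y₂ + r₂` and
`dist (ι y) zᵢ = dist y yᵢ + rᵢ` (if `rᵢ = 0` the point `zᵢ` coincides with `ι yᵢ`). -/
structure IsTwoPointExt {Y Z : Type*} [MetricSpace Y] [MetricSpace Z]
    (y₁ y₂ : Y) (r₁ r₂ : ℝ) (ι : Y → Z) (z₁ z₂ : Z) : Prop where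
  isometry : Isometry ι
  covers : Set.range ι ∪ {z₁, z₂} = Set.univ
  dist_z₁_z₂ : dist z₁ z₂ = r₁ + dist y₁ y₂ + r₂
  dist_z₁ : ∀ y : Y, dist (ι y) z₁ = dist y y₁ + r₁
  dist_z₂ : ∀ y : Y, dist (ι y) z₂ = dist y y₂ + r₂

open scoped NNReal

lemma IsCorrespondence.preimage_swap {X Y : Type*} {R : Set (X × Y)}
    (hR : IsCorrespondence R) : IsCorrespondence (Prod.swap ⁻¹' R) :=
  ⟨hR.2, hR.1⟩

section GromovHausdorff

variable {X Y : Type*} [MetricSpace X] [MetricSpace Y]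

lemma le_corrDistortion {R : Set (X × Y)} {p q : X × Y} (hp : p ∈ R) (hq : q ∈ R) :
    ENNReal.ofReal |dist p.1 q.1 - dist p.2 q.2| ≤ corrDistortion R :=
  le_iSup₂_of_le p hp (le_iSup₂_of_le q hq le_rfl)

lemma corrDistortion_preimage_swap_le (R : Set (X × Y)) :
    corrDistortion (Prod.swap ⁻¹' R) ≤ corrDistortion R := by
  refine iSup₂_le fun p hp => iSup₂_le fun q hq => ?_
  rw [abs_sub_comm]
  exact le_corrDistortion (p := p.swap) (q := q.swap) hp hq

lemma ghDist_le_ghDist_swap : ghDist X Y ≤ ghDist Y X := by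
  refine ENNReal.div_le_div_right (le_iInf₂ fun R hR => ?_) 2
  exact iInf₂_le_of_le _ hR.preimage_swap (corrDistortion_preimage_swap_le R)

lemma ghDist_comm : ghDist X Y = ghDist Y X :=
  ghDist_le_ghDist_swap.antisymm ghDist_le_ghDist_swap

lemma two_mul_ghDist (X Y : Type*) [MetricSpace X] [MetricSpace Y] :
    2 * ghDist X Y = ⨅ (R : Set (X × Y)) (_ : IsCorrespondence R), corrDistortion R :=
  ENNReal.mul_div_cancel two_ne_zero ENNReal.ofNat_ne_top

lemma ediam_le_ediam_add_corrDistortion {R : Set (X × Y)} (hR : IsCorrespondence R) :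
    ediam (univ : Set X) ≤ ediam (univ : Set Y) + corrDistortion R := by
  refine ediam_le fun x _ x' _ => ?_
  obtain ⟨y, hy⟩ := hR.1 x
  obtain ⟨y', hy'⟩ := hR.1 x'
  calc edist x x' = ENNReal.ofReal (dist y y' + (dist x x' - dist y y')) := by
        rw [edist_dist, add_sub_cancel]
    _ ≤ ENNReal.ofReal (dist y y') + ENNReal.ofReal |dist x x' - dist y y'| := by
        grw [ENNReal.ofReal_add_le, ← le_abs_self]
    _ ≤ ediam (univ : Set Y) + corrDistortion R := by
        rw [← edist_dist]
        exact add_le_add (edist_le_ediam_of_mem (mem_univ _) (mem_univ _))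
          (le_corrDistortion hy hy')

lemma ediam_le_ediam_add_two_mul_ghDist :
    ediam (univ : Set X) ≤ ediam (univ : Set Y) + 2 * ghDist X Y := by
  rw [two_mul_ghDist, ENNReal.add_iInf]
  exact le_iInf fun R => by
    rw [ENNReal.add_iInf]
    exact le_iInf ediam_le_ediam_add_corrDistortion

lemma ofReal_diam_sub_diam_le_two_mul_ghDist (hY : ediam (univ : Set Y) ≠ ⊤) :
    ENNReal.ofReal (diam (univ : Set X) - diam (univ : Set Y)) ≤ 2 * ghDist X Y := by
  rw [ENNReal.ofReal_sub _ diam_nonneg, diam, diam, ENNReal.ofReal_toReal hY, tsub_le_iff_left]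
  exact ENNReal.ofReal_toReal_le.trans ediam_le_ediam_add_two_mul_ghDist

lemma ofReal_abs_diam_sub_diam_le_two_mul_ghDist (hX : ediam (univ : Set X) ≠ ⊤)
    (hY : ediam (univ : Set Y) ≠ ⊤) :
    ENNReal.ofReal |diam (univ : Set X) - diam (univ : Set Y)| ≤ 2 * ghDist X Y := by
  rw [abs_eq_max_neg, ENNReal.ofReal_max, neg_sub]
  refine max_le (ofReal_diam_sub_diam_le_two_mul_ghDist hY) ?_
  rw [ghDist_comm]
  exact ofReal_diam_sub_diam_le_two_mul_ghDist hX

lemma two_mul_ghDist_le_of_surjective {W : Type*} {f : W → X} {g : W → Y}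
    (hf : f.Surjective) (hg : g.Surjective) {c : ℝ}
    (h : ∀ w w', |dist (f w) (f w') - dist (g w) (g w')| ≤ c) :
    2 * ghDist X Y ≤ ENNReal.ofReal c := by
  rw [two_mul_ghDist]
  refine iInf₂_le_of_le (range fun w => (f w, g w))
    ⟨fun x => ?_, fun y => ?_⟩ (iSup₂_le ?_)
  · obtain ⟨w, rfl⟩ := hf x
    exact ⟨g w, w, rfl⟩
  · obtain ⟨w, rfl⟩ := hg y
    exact ⟨f w, w, rfl⟩
  · rintro _ ⟨w, rfl⟩
    exact iSup₂_le fun _ ⟨w', hw'⟩ => hw' ▸ ENNReal.ofReal_le_ofReal (h w w')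

end GromovHausdorff

namespace TwoPointExt

variable {Y : Type*} (y₁ y₂ : Y) (a b : ℝ≥0)

def center : Y ⊕ Bool → Y
  | .inl y => y
  | .inr false => y₁
  | .inr true => y₂

def radius : Y ⊕ Bool → ℝ≥0
  | .inl _ => 0
  | .inr false => a
  | .inr true => b

variable {a b}

lemma radius_add_radius_le {x x' : Y ⊕ Bool} (h : x ≠ x') :
    radius a b x + radius a b x' ≤ a + b := by
  rcases x with _ | _ | _ <;> rcases x' with _ | _ | _ <;> simp_all [radius, add_comm]

lemma abs_radius_add_radius_sub_le (a' b' : ℝ≥0) {x x' : Y ⊕ Bool} (h : x ≠ x') :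
    |(radius a b x + radius a b x' : ℝ) - (radius a' b' x + radius a' b' x')|
      ≤ |(a : ℝ) - a'| + |(b : ℝ) - b'| := by
  rcases x with _ | _ | _ <;> rcases x' with _ | _ | _ <;> simp_all [radius]
  all_goals first
    | positivity
    | rw [abs_le]
      constructor <;> linarith [le_abs_self ((a : ℝ) - a'), neg_abs_le ((a : ℝ) - a'),
        le_abs_self ((b : ℝ) - b'), neg_abs_le ((b : ℝ) - b')]

variable [PseudoMetricSpace Y] (a b)

open Classical in
noncomputable def extDist (x x' : Y ⊕ Bool) : ℝ :=
  if x = x' then 0 else dist (center y₁ y₂ x) (center y₁ y₂ x') + radius a b x + radius a b x'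

variable {y₁ y₂}

lemma extDist_self (x : Y ⊕ Bool) : extDist y₁ y₂ a b x x = 0 := if_pos rfl

lemma extDist_of_ne {x x' : Y ⊕ Bool} (h : x ≠ x') :
    extDist y₁ y₂ a b x x' =
      dist (center y₁ y₂ x) (center y₁ y₂ x') + radius a b x + radius a b x' :=
  if_neg h

lemma extDist_comm (x x' : Y ⊕ Bool) : extDist y₁ y₂ a b x x' = extDist y₁ y₂ a b x' x := by
  by_cases h : x = x'
  · rw [h]
  · rw [extDist_of_ne a b h, extDist_of_ne a b (Ne.symm h), dist_comm]
    ring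

lemma extDist_nonneg (x x' : Y ⊕ Bool) : 0 ≤ extDist y₁ y₂ a b x x' := by
  unfold extDist
  split_ifs <;> positivity

lemma extDist_triangle (x x' x'' : Y ⊕ Bool) :
    extDist y₁ y₂ a b x x'' ≤ extDist y₁ y₂ a b x x' + extDist y₁ y₂ a b x' x'' := by
  by_cases hxx'' : x = x''
  · rw [hxx'', extDist_self]
    exact add_nonneg (extDist_nonneg ..) (extDist_nonneg ..)
  by_cases hxx' : x = x'
  · rw [hxx', extDist_self, zero_add]
  by_cases hx'x'' : x' = x''
  · rw [hx'x'', extDist_self, add_zero]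
  rw [extDist_of_ne a b hxx'', extDist_of_ne a b hxx', extDist_of_ne a b hx'x'']
  have := dist_triangle (center y₁ y₂ x) (center y₁ y₂ x') (center y₁ y₂ x'')
  have := (radius a b x').2
  linarith

lemma extDist_le (hd : ∀ u v : Y, dist u v ≤ dist y₁ y₂) (x x' : Y ⊕ Bool) :
    extDist y₁ y₂ a b x x' ≤ dist y₁ y₂ + a + b := by
  by_cases h : x = x'
  · rw [h, extDist_self]
    positivity
  rw [extDist_of_ne a b h, add_assoc, add_assoc]
  exact add_le_add (hd _ _) (mod_cast radius_add_radius_le h)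

lemma abs_extDist_sub_extDist_le (a' b' : ℝ≥0) (x x' : Y ⊕ Bool) :
    |extDist y₁ y₂ a b x x' - extDist y₁ y₂ a' b' x x'| ≤ |(a : ℝ) - a'| + |(b : ℝ) - b'| := by
  by_cases h : x = x'
  · rw [h, extDist_self, extDist_self, sub_zero, abs_zero]
    positivity
  rw [extDist_of_ne a b h, extDist_of_ne a' b' h]
  convert abs_radius_add_radius_sub_le a' b' h using 2
  ring

lemma extDist_inl_inl (u v : Y) : extDist y₁ y₂ a b (.inl u) (.inl v) = dist u v := by
  by_cases h : u = v
  · rw [h, extDist_self, dist_self]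
  · simp [extDist_of_ne a b (Sum.inl_injective.ne h), center, radius]

lemma extDist_inl_false (u : Y) :
    extDist y₁ y₂ a b (.inl u) (.inr false) = dist u y₁ + a := by
  simp [extDist_of_ne, center, radius]

lemma extDist_inl_true (u : Y) :
    extDist y₁ y₂ a b (.inl u) (.inr true) = dist u y₂ + b := by
  simp [extDist_of_ne, center, radius]

lemma extDist_false_true :
    extDist y₁ y₂ a b (.inr false) (.inr true) = a + dist y₁ y₂ + b := by
  simp [extDist_of_ne, center, radius]
  ring

def Carrier (_y₁ _y₂ : Y) (_a _b : ℝ≥0) : Type _ := Y ⊕ Bool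

noncomputable instance : PseudoMetricSpace (Carrier y₁ y₂ a b) where
  dist := extDist y₁ y₂ a b
  dist_self := extDist_self a b
  dist_comm := extDist_comm a b
  dist_triangle := extDist_triangle a b

end TwoPointExt

/-- The two-point extension `Z_{a,b}(y₁,y₂)`: the metric quotient of `Y ⊕ Bool`, where
`.inr false` and `.inr true` play `z₁` and `z₂`; the quotient identifies `zᵢ` with `yᵢ` when
its radius vanishes. -/
def TwoPointExt {Y : Type*} [PseudoMetricSpace Y] (y₁ y₂ : Y) (a b : ℝ≥0) : Type _ :=
  SeparationQuotient (TwoPointExt.Carrier y₁ y₂ a b)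

namespace TwoPointExt

section PseudoMetric

variable {Y : Type*} [PseudoMetricSpace Y] {y₁ y₂ : Y} {a b : ℝ≥0}

noncomputable instance : MetricSpace (TwoPointExt y₁ y₂ a b) :=
  inferInstanceAs (MetricSpace (SeparationQuotient _))

noncomputable def mk : Y ⊕ Bool → TwoPointExt y₁ y₂ a b :=
  SeparationQuotient.mk (X := Carrier y₁ y₂ a b)

lemma mk_surjective : (mk : Y ⊕ Bool → TwoPointExt y₁ y₂ a b).Surjective :=
  SeparationQuotient.surjective_mk (X := Carrier y₁ y₂ a b)

lemma dist_mk (x x' : Y ⊕ Bool) :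
    dist (mk x : TwoPointExt y₁ y₂ a b) (mk x') = extDist y₁ y₂ a b x x' :=
  rfl

lemma two_mul_ghDist_le (a' b' : ℝ≥0) :
    2 * ghDist (TwoPointExt y₁ y₂ a b) (TwoPointExt y₁ y₂ a' b')
      ≤ ENNReal.ofReal (|(a : ℝ) - a'| + |(b : ℝ) - b'|) :=
  two_mul_ghDist_le_of_surjective mk_surjective mk_surjective
    (abs_extDist_sub_extDist_le a b a' b')

variable (hd : ∀ u v : Y, dist u v ≤ dist y₁ y₂)
include hd

lemma dist_le (z z' : TwoPointExt y₁ y₂ a b) : dist z z' ≤ dist y₁ y₂ + a + b := by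
  obtain ⟨x, rfl⟩ := mk_surjective z
  obtain ⟨x', rfl⟩ := mk_surjective z'
  exact extDist_le a b hd x x'

lemma ediam_univ_ne_top : ediam (univ : Set (TwoPointExt y₁ y₂ a b)) ≠ ⊤ :=
  ne_top_of_le_ne_top ENNReal.ofReal_ne_top
    (ediam_le_of_forall_dist_le fun z _ z' _ => dist_le hd z z')

lemma diam_univ : diam (univ : Set (TwoPointExt y₁ y₂ a b)) = dist y₁ y₂ + a + b := by
  refine le_antisymm
    (diam_le_of_forall_dist_le (by positivity) fun z _ z' _ => dist_le hd z z') ?_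
  calc dist y₁ y₂ + a + b = dist (mk (.inr false) : TwoPointExt y₁ y₂ a b) (mk (.inr true)) := by
        rw [dist_mk, extDist_false_true]
        ring
    _ ≤ diam univ := dist_le_diam_of_mem' (ediam_univ_ne_top hd) (mem_univ _) (mem_univ _)

/-- When the radii move in the same direction, the identity correspondence is optimal: its
distortion equals the change in diameter. -/
lemma two_mul_ghDist_eq {a' b' : ℝ≥0} (h : 0 ≤ ((a : ℝ) - a') * ((b : ℝ) - b')) :
    2 * ghDist (TwoPointExt y₁ y₂ a b) (TwoPointExt y₁ y₂ a' b')
      = ENNReal.ofReal (|(a : ℝ) - a'| + |(b : ℝ) - b'|) := by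
  refine (two_mul_ghDist_le a' b').antisymm ?_
  have hdiam := ofReal_abs_diam_sub_diam_le_two_mul_ghDist
    (ediam_univ_ne_top hd (a := a) (b := b)) (ediam_univ_ne_top hd (a := a') (b := b'))
  rwa [diam_univ hd, diam_univ hd, show dist y₁ y₂ + a + b - (dist y₁ y₂ + a' + b')
    = ((a : ℝ) - a') + ((b : ℝ) - b') by ring, (abs_add_eq_add_abs_iff _ _).2 (mul_nonneg_iff.1 h)]
    at hdiam

end PseudoMetric

variable {Y : Type*} [MetricSpace Y] (y₁ y₂ : Y) (a b : ℝ≥0)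

lemma isTwoPointExt :
    IsTwoPointExt y₁ y₂ a b (fun y => (mk (.inl y) : TwoPointExt y₁ y₂ a b))
      (mk (.inr false)) (mk (.inr true)) where
  isometry := Isometry.of_dist_eq fun u v => extDist_inl_inl a b u v
  covers := by
    refine eq_univ_of_forall fun z => ?_
    obtain ⟨x | _ | _, rfl⟩ := mk_surjective z <;> simp
  dist_z₁_z₂ := extDist_false_true a b
  dist_z₁ := extDist_inl_false a b
  dist_z₂ := extDist_inl_true a b

end TwoPointExt

theorem stmt15_general {Y : Type u} [MetricSpace Y]
    (hYb : EMetric.diam (Set.univ : Set Y) ≠ ⊤)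
    (y₁ y₂ : Y) (hdiam : dist y₁ y₂ = Metric.diam (Set.univ : Set Y))
    (r₁ r₂ : ℝ) (hr₁ : 0 ≤ r₁) (hr₂ : 0 ≤ r₂) :
    ∃ (Z : ℝ → Type u) (MZ : ∀ t, MetricSpace (Z t))
      (ι : ∀ t, Y → Z t) (z₁ : ∀ t, Z t) (z₂ : ∀ t, Z t),
      (∀ t, t ∈ Set.Icc (0 : ℝ) 1 →
        @IsTwoPointExt Y (Z t) _ (MZ t) y₁ y₂ (r₁ * t) (r₂ * t) (ι t) (z₁ t) (z₂ t)) ∧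
      (∀ t, t ∈ Set.Icc (0 : ℝ) 1 →
        @Metric.diam (Z t) (MZ t).toPseudoMetricSpace Set.univ
          = Metric.diam (Set.univ : Set Y) + r₁ * t + r₂ * t) ∧
      (∀ t₁, t₁ ∈ Set.Icc (0 : ℝ) 1 → ∀ t₂, t₂ ∈ Set.Icc (0 : ℝ) 1 →
        2 * @ghDist (Z t₁) (Z t₂) (MZ t₁) (MZ t₂)
          = ENNReal.ofReal (|t₁ - t₂| * (r₁ + r₂))) := by
  have hd (u v : Y) : dist u v ≤ dist y₁ y₂ :=
    hdiam ▸ dist_le_diam_of_mem' hYb (mem_univ u) (mem_univ v)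
  have coe_toNNReal {r t : ℝ} (hr : 0 ≤ r) (ht : t ∈ Icc (0 : ℝ) 1) :
      ((r * t).toNNReal : ℝ) = r * t :=
    Real.coe_toNNReal _ (mul_nonneg hr ht.1)
  refine ⟨fun t => TwoPointExt y₁ y₂ (r₁ * t).toNNReal (r₂ * t).toNNReal, fun t => inferInstance,
    fun t y => TwoPointExt.mk (.inl y), fun t => TwoPointExt.mk (.inr false),
    fun t => TwoPointExt.mk (.inr true), fun t ht => ?_, fun t ht => ?_,
    fun t₁ ht₁ t₂ ht₂ => ?_⟩
  · have := TwoPointExt.isTwoPointExt y₁ y₂ (r₁ * t).toNNReal (r₂ * t).toNNReal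
    rwa [coe_toNNReal hr₁ ht, coe_toNNReal hr₂ ht] at this
  · rw [TwoPointExt.diam_univ hd, coe_toNNReal hr₁ ht, coe_toNNReal hr₂ ht, hdiam]
  · dsimp only
    rw [TwoPointExt.two_mul_ghDist_eq hd]
    all_goals simp only [coe_toNNReal, hr₁, hr₂, ht₁, ht₂, ← mul_sub]
    · rw [abs_mul, abs_mul, abs_of_nonneg hr₁, abs_of_nonneg hr₂, ← add_mul, mul_comm]
    · rw [mul_mul_mul_comm]
      exact mul_nonneg (mul_nonneg hr₁ hr₂) (mul_self_nonneg _)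

/-- the two-point extensions `Z_{r₁t, r₂t}(y₁,y₂)`, `t ∈ [0,1]`, exist as
metric spaces, `diam Z_{r₁t,r₂t} = diam Y + r₁t + r₂t`, and
`2·d_GH(γ(t₁), γ(t₂)) = |t₁ − t₂|·(r₁+r₂)`; in particular `γ` is a shortest curve from
`Y` to `Z_{r₁,r₂}(y₁,y₂)`. -/
theorem stmt15 {Y : Type u} [MetricSpace Y] [Nonempty Y]
    (hYb : EMetric.diam (Set.univ : Set Y) ≠ ⊤)
    (y₁ y₂ : Y) (hdiam : dist y₁ y₂ = Metric.diam (Set.univ : Set Y))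
    (r₁ r₂ : ℝ) (hr₁ : 0 ≤ r₁) (hr₂ : 0 ≤ r₂) :
    ∃ (Z : ℝ → Type u) (MZ : ∀ t, MetricSpace (Z t))
      (ι : ∀ t, Y → Z t) (z₁ : ∀ t, Z t) (z₂ : ∀ t, Z t),
      (∀ t, t ∈ Set.Icc (0 : ℝ) 1 →
        @IsTwoPointExt Y (Z t) _ (MZ t) y₁ y₂ (r₁ * t) (r₂ * t) (ι t) (z₁ t) (z₂ t)) ∧
      (∀ t, t ∈ Set.Icc (0 : ℝ) 1 →
        @Metric.diam (Z t) (MZ t).toPseudoMetricSpace Set.univ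
          = Metric.diam (Set.univ : Set Y) + r₁ * t + r₂ * t) ∧
      (∀ t₁, t₁ ∈ Set.Icc (0 : ℝ) 1 → ∀ t₂, t₂ ∈ Set.Icc (0 : ℝ) 1 →
        2 * @ghDist (Z t₁) (Z t₂) (MZ t₁) (MZ t₂)
          = ENNReal.ofReal (|t₁ - t₂| * (r₁ + r₂))) :=
  stmt15_general hYb y₁ y₂ hdiam r₁ r₂ hr₁ hr₂
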